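/- Riemann–Roch for graphs: for a loopless finite connected graph G of genus g = |E(G)| − |V(G)| + 1, and any divisor d on G, r_G(d) − r_G(K_G − d) = deg(d) − g + 1, where K_G = Σ_v (val(v) − 2)[v]. -/

import Mathlib

open scoped Classical

namespace BN

/-- A finite multigraph: `E u v` is the number of edges (other than loops)
between distinct vertices `u` and `v`, and `loops v` is the number of loops at `v`. -/
structure MultiGraph (V : Type) where
  E : V → V → ℕ
  loops : V → ℕ
  symm : ∀ u v, E u v = E v u
  noDiag : ∀ v, E v v = 0

variable {V V1 V2 : Type}

/-- The divisor `[v]`. -/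
def one [DecidableEq V] (v : V) : V → ℤ := fun w => if w = v then 1 else 0

/-- Degree of a divisor. -/
def deg [Fintype V] (d : V → ℤ) : ℤ := ∑ v, d v

/-- Effective divisor. -/
def Effective (d : V → ℤ) : Prop := ∀ v, 0 ≤ d v

namespace MultiGraph

/-- Divisor of a rational function (loops contribute nothing). -/
def div [Fintype V] (G : MultiGraph V) (f : V → ℤ) : V → ℤ :=
  fun v => ∑ w, (G.E v w : ℤ) * (f w - f v)

def Principal [Fintype V] (G : MultiGraph V) (d : V → ℤ) : Prop :=
  ∃ f : V → ℤ, d = G.div f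

def LinEquiv [Fintype V] (G : MultiGraph V) (d d' : V → ℤ) : Prop :=
  G.Principal (d' - d)

/-- `d` is linearly equivalent to an effective divisor. -/
def Winnable [Fintype V] (G : MultiGraph V) (d : V → ℤ) : Prop :=
  ∃ e : V → ℤ, Effective e ∧ G.LinEquiv d e

/-- The Baker–Norine rank of a divisor. -/
noncomputable def rank [Fintype V] (G : MultiGraph V) (d : V → ℤ) : ℤ :=
  if G.Winnable d then
    (sSup {s : ℕ | ∀ e : V → ℤ, Effective e → deg e = (s : ℤ) → G.Winnable (d - e)} : ℕ)
  else -1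

def Connected (G : MultiGraph V) : Prop :=
  ∀ u v : V, Relation.ReflTransGen (fun a b => 0 < G.E a b) u v

def Loopless (G : MultiGraph V) : Prop := ∀ v, G.loops v = 0

/-- Number of edges from `v` to vertices outside `A`. -/
def outdeg [Fintype V] [DecidableEq V] (G : MultiGraph V) (A : Finset V) (v : V) : ℕ :=
  ∑ w ∈ Finset.univ.filter (fun w => w ∉ A), G.E v w

/-- `v0`-reduced divisor. -/
def Reduced [Fintype V] [DecidableEq V] (G : MultiGraph V) (v0 : V) (d : V → ℤ) : Prop :=
  (∀ v, v ≠ v0 → 0 ≤ d v) ∧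
  ∀ A : Finset V, A.Nonempty → v0 ∉ A → ∃ v ∈ A, d v < (G.outdeg A v : ℤ)

def valence [Fintype V] (G : MultiGraph V) (v : V) : ℕ :=
  (∑ w, G.E v w) + 2 * G.loops v

/-- Canonical divisor. -/
def K [Fintype V] (G : MultiGraph V) : V → ℤ := fun v => (G.valence v : ℤ) - 2

def edgeCount [Fintype V] (G : MultiGraph V) : ℕ :=
  (∑ v, ∑ w, G.E v w) / 2 + ∑ v, G.loops v

end MultiGraph

open MultiGraph

/-- The graph obtained by joining `G1` and `G2` by a single bridge from `v1` to `v2`. -/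
def bridgeJoin [DecidableEq V1] [DecidableEq V2]
    (G1 : MultiGraph V1) (G2 : MultiGraph V2) (v1 : V1) (v2 : V2) :
    MultiGraph (V1 ⊕ V2) where
  E x y :=
    match x, y with
    | .inl a, .inl b => G1.E a b
    | .inr a, .inr b => G2.E a b
    | .inl a, .inr b => if a = v1 ∧ b = v2 then 1 else 0
    | .inr b, .inl a => if a = v1 ∧ b = v2 then 1 else 0
  loops := Sum.elim G1.loops G2.loops
  symm := by rintro (a | a) (b | b) <;> simp [G1.symm, G2.symm]
  noDiag := by rintro (a | a) <;> simp [G1.noDiag, G2.noDiag]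

/-- The virtual loopless graph `Ḡ•` of a vertex-weighted graph `(G, ω)`:
insert a vertex into each loop of `G` and add `ω v` subdivided loops at each `v`.
The inserted vertices are the pairs `⟨v, i⟩` with `i : Fin (G.loops v + ω v)`,
each joined to `v` by two parallel edges. -/
noncomputable def bullet (G : MultiGraph V) (ω : V → ℕ) :
    MultiGraph (V ⊕ (Σ v : V, Fin (G.loops v + ω v))) where
  E x y :=
    match x, y with
    | .inl u, .inl v => G.E u v
    | .inl u, .inr w => if u = w.1 then 2 else 0
    | .inr w, .inl u => if u = w.1 then 2 else 0
    | .inr _, .inr _ => 0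
  loops := fun _ => 0
  symm := by rintro (u | u) (v | v) <;> simp [G.symm]
  noDiag := by rintro (v | v) <;> simp [G.noDiag]

/-- The rank `r_Ḡ(d)` of a divisor on a vertex-weighted graph `(G, ω)`:
the Baker–Norine rank of `d` on `Ḡ•`. -/
noncomputable def wrank [Fintype V] [DecidableEq V] (G : MultiGraph V) (ω : V → ℕ)
    (d : V → ℤ) : ℤ :=
  (bullet G ω).rank (Sum.elim d 0)

/-- `v` is a base-point of the complete linear system `|d|•` on `Ḡ•`. -/
def wBasePoint [Fintype V] [DecidableEq V] (G : MultiGraph V) (ω : V → ℕ)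
    (d : V → ℤ) (v : V) : Prop :=
  wrank G ω (d - one v) = wrank G ω d

/-- Genus of a vertex-weighted graph. -/
def genus [Fintype V] (G : MultiGraph V) (ω : V → ℕ) : ℤ :=
  (G.edgeCount : ℤ) - Fintype.card V + 1 + ∑ v, (ω v : ℤ)

/-- A vertex-weighted graph of genus `≥ 2` is hyperelliptic if `Ḡ•` carries a
divisor of degree `2` and rank `1`. -/
def Hyperelliptic [Fintype V] [DecidableEq V] (G : MultiGraph V) (ω : V → ℕ) : Prop :=
  2 ≤ genus G ω ∧ ∃ d, deg d = 2 ∧ (bullet G ω).rank d = 1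

/-- The canonical divisor `K_Ḡ` of a vertex-weighted graph, viewed as a divisor on `G`. -/
noncomputable def wK [Fintype V] (G : MultiGraph V) (ω : V → ℕ) : V → ℤ :=
  fun v => (bullet G ω).K (Sum.inl v)

/-!
For an injective numbering `ρ` of the vertices (an acyclic orientation), let `ν_ρ(v)` be the
number of edges from `v` to earlier vertices, minus one. No `ν_ρ` is winnable: at the earliest
vertex where a firing script is maximal, `ν_ρ + div f` is negative. Conversely, every
non-winnable divisor is equivalent to one below some `ν_ρ`: pass to a `q`-reduced
representative, which is then negative at `q`, and read `ρ` off Dhar's burning algorithm.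
Hence `r(d) + 1` is the least value of `deg⁺(d + div f - ν_ρ)` (Cori–Le Borgne). Reversing
`ρ` turns `ν_ρ` into `K - ν_ρ`, so `x ↦ -x` matches the candidates for `d` with those for
`K - d`, and `deg⁺(-x) = deg⁺ x - deg x` with `deg x = deg d - (g - 1)` gives Riemann–Roch.
-/

open Finset

section Divisors

variable [Fintype V]

lemma deg_add (x y : V → ℤ) : deg (x + y) = deg x + deg y := sum_add_distrib

lemma deg_sub (x y : V → ℤ) : deg (x - y) = deg x - deg y := sum_sub_distrib ..

lemma Effective.eq_zero_of_deg_eq_zero {e : V → ℤ} (he : Effective e) (h : deg e = 0) :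
    e = 0 :=
  funext fun v => (sum_eq_zero_iff_of_nonneg fun w _ => he w).1 h v (mem_univ v)

def degPos (x : V → ℤ) : ℕ := ∑ v, (x v).toNat

lemma degPos_eq_deg_sup_zero (x : V → ℤ) : (degPos x : ℤ) = deg (x ⊔ 0) := by
  simp [degPos, deg]

lemma degPos_neg (x : V → ℤ) : (degPos (-x) : ℤ) = degPos x - deg x := by
  simp only [degPos, deg, Nat.cast_sum, ← sum_sub_distrib]
  exact sum_congr rfl fun v _ => by simp only [Pi.neg_apply]; omega

lemma degPos_le_deg {x e : V → ℤ} (he : Effective e) (hxe : x ≤ e) :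
    (degPos x : ℤ) ≤ deg e := by
  simp only [degPos, deg, Nat.cast_sum, Int.toNat_eq_max]
  exact sum_le_sum fun v _ => max_le (hxe v) (he v)

end Divisors

namespace MultiGraph

variable [Fintype V] (G : MultiGraph V)

def divHom : (V → ℤ) →+ (V → ℤ) where
  toFun := G.div
  map_zero' := by ext; simp [div]
  map_add' f g := by ext; simp only [div, Pi.add_apply, ← sum_add_distrib]; congr! 1; ring

lemma div_add (f g : V → ℤ) : G.div (f + g) = G.div f + G.div g := map_add G.divHom f g

lemma div_neg (f : V → ℤ) : G.div (-f) = -G.div f := map_neg G.divHom f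

lemma div_sub (f g : V → ℤ) : G.div (f - g) = G.div f - G.div g := map_sub G.divHom f g

lemma div_zsmul (n : ℤ) (f : V → ℤ) : G.div (n • f) = n • G.div f := map_zsmul G.divHom n f

lemma sum_div_eq_sum_compl (f : V → ℤ) (A : Finset V) :
    ∑ v ∈ A, G.div f v = ∑ v ∈ A, ∑ w ∈ Aᶜ, (G.E v w : ℤ) * (f w - f v) := by
  have hA : ∑ v ∈ A, ∑ w ∈ A, (G.E v w : ℤ) * (f w - f v) = 0 := by
    have h := sum_comm (s := A) (t := A) (f := fun v w => (G.E v w : ℤ) * (f w - f v))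
    have h' : ∑ v ∈ A, ∑ w ∈ A, (G.E w v : ℤ) * (f v - f w)
        = -∑ v ∈ A, ∑ w ∈ A, (G.E v w : ℤ) * (f w - f v) := by
      simp only [← sum_neg_distrib, G.symm _ _, ← mul_neg, neg_sub]
    omega
  simp only [div, ← sum_compl_add_sum A, sum_add_distrib, hA, add_zero]

lemma deg_div (f : V → ℤ) : deg (G.div f) = 0 := by
  simpa [deg] using G.sum_div_eq_sum_compl f univ

lemma outdeg_eq_sum_compl (A : Finset V) (v : V) :
    (G.outdeg A v : ℤ) = ∑ w ∈ Aᶜ, (G.E v w : ℤ) := by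
  simp [outdeg, ← compl_filter]

lemma div_indicator_of_mem {A : Finset V} {v : V} (hv : v ∈ A) :
    G.div ((A : Set V).indicator 1) v = -G.outdeg A v := by
  rw [outdeg_eq_sum_compl, div, ← sum_compl_add_sum A, ← sum_neg_distrib]
  simp +contextual [hv, mem_compl.1 _]

lemma div_indicator_of_notMem {A : Finset V} {v : V} (hv : v ∉ A) :
    G.div ((A : Set V).indicator 1) v = ∑ w ∈ A, (G.E v w : ℤ) := by
  rw [div, ← sum_compl_add_sum A]
  simp +contextual [hv, mem_compl.1 _]

lemma winnable_iff {d : V → ℤ} : G.Winnable d ↔ ∃ f, Effective (d + G.div f) := by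
  constructor
  · rintro ⟨e, he, f, hf⟩
    exact ⟨f, by rwa [← hf, add_sub_cancel]⟩
  · rintro ⟨f, hf⟩
    exact ⟨_, hf, f, add_sub_cancel_left _ _⟩

lemma Winnable.mono {G : MultiGraph V} {d d' : V → ℤ} (h : G.Winnable d) (hle : d ≤ d') :
    G.Winnable d' := by
  obtain ⟨f, hf⟩ := G.winnable_iff.1 h
  exact G.winnable_iff.2 ⟨f, fun v => (hf v).trans (by simpa using hle v)⟩

lemma Winnable.add_div {G : MultiGraph V} {d : V → ℤ} (h : G.Winnable d) (f : V → ℤ) :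
    G.Winnable (d + G.div f) := by
  obtain ⟨g, hg⟩ := G.winnable_iff.1 h
  exact G.winnable_iff.2 ⟨g - f, by rwa [div_sub, add_add_sub_cancel]⟩

lemma winnable_of_isEmpty [IsEmpty V] (d : V → ℤ) : G.Winnable d :=
  G.winnable_iff.2 ⟨0, isEmptyElim⟩

/-! ### The divisors `ν_ρ` -/

def nu (ρ : V → ℕ) : V → ℤ := fun v => (∑ w with ρ w < ρ v, (G.E v w : ℤ)) - 1

lemma div_le_neg_sum_of_forall_le {f : V → ℤ} {v : V} (hmax : ∀ w, f w ≤ f v) :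
    G.div f v ≤ -∑ w with f w < f v, (G.E v w : ℤ) := by
  calc G.div f v ≤ ∑ w, if f w < f v then -(G.E v w : ℤ) else 0 :=
        sum_le_sum fun w _ => by
          have := hmax w
          have : (0 : ℤ) ≤ G.E v w := by positivity
          split_ifs <;> nlinarith
    _ = _ := by rw [sum_ite, sum_const_zero, add_zero, sum_neg_distrib]

lemma nu_not_winnable [Nonempty V] (ρ : V → ℕ) : ¬ G.Winnable (G.nu ρ) := by
  rw [winnable_iff]
  rintro ⟨f, hf⟩
  obtain ⟨u, -, hu⟩ := exists_max_image univ f univ_nonempty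
  obtain ⟨v, hv, hvmin⟩ := exists_min_image {w | f w = f u} ρ ⟨u, by simp⟩
  rw [mem_filter_univ] at hv
  have hearlier : ∑ w with ρ w < ρ v, (G.E v w : ℤ) ≤ ∑ w with f w < f v, (G.E v w : ℤ) := by
    refine sum_le_sum_of_subset_of_nonneg (fun w hw => ?_) fun _ _ _ => by positivity
    simp only [mem_filter_univ] at hw ⊢
    refine (hv ▸ hu w (mem_univ w)).lt_of_ne fun h => ?_
    exact (hvmin w (by simpa [hv] using h)).not_gt hw
  have := G.div_le_neg_sum_of_forall_le (f := f) (v := v) fun w => hv ▸ hu w (mem_univ w)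
  have := hf v
  simp only [nu, Pi.add_apply] at this
  omega

lemma sum_E_eq_sum_lt_add_sum_gt {ρ : V → ℕ} (hρ : Function.Injective ρ) (v : V) :
    ∑ w, G.E v w = ∑ w with ρ w < ρ v, G.E v w + ∑ w with ρ v < ρ w, G.E v w := by
  simp only [sum_filter, ← sum_add_distrib]
  refine sum_congr rfl fun w _ => ?_
  rcases lt_trichotomy (ρ w) (ρ v) with h | h | h
  · simp [h, h.not_gt]
  · simp [hρ h, G.noDiag]
  · simp [h, h.not_gt]

lemma sum_sum_E_eq_two_mul {ρ : V → ℕ} (hρ : Function.Injective ρ) :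
    ∑ v, ∑ w, G.E v w = 2 * ∑ v, ∑ w with ρ w < ρ v, G.E v w := by
  have hgt : ∑ v, ∑ w with ρ v < ρ w, G.E v w = ∑ v, ∑ w with ρ w < ρ v, G.E v w := by
    simp only [sum_filter]
    rw [sum_comm]
    exact sum_congr rfl fun _ _ => sum_congr rfl fun _ _ => by rw [G.symm]
  rw [sum_congr rfl fun v _ => G.sum_E_eq_sum_lt_add_sum_gt hρ v, sum_add_distrib, hgt, two_mul]

lemma deg_nu (hl : G.Loopless) {ρ : V → ℕ} (hρ : Function.Injective ρ) :
    deg (G.nu ρ) = genus G (fun _ => 0) - 1 := by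
  have hloops : ∑ v, G.loops v = 0 := sum_eq_zero fun v _ => hl v
  simp only [deg, nu, genus, edgeCount, G.sum_sum_E_eq_two_mul hρ, hloops,
    Nat.mul_div_cancel_left _ two_pos, sum_sub_distrib]
  push_cast
  simp

lemma exists_nu_eq_K_sub_nu (hl : G.Loopless) {ρ : V → ℕ} (hρ : Function.Injective ρ) :
    ∃ ρ' : V → ℕ, Function.Injective ρ' ∧ G.nu ρ' = G.K - G.nu ρ := by
  have hN : ∀ v, ρ v ≤ univ.sup ρ := fun v => le_sup (mem_univ v)
  refine ⟨fun v => univ.sup ρ - ρ v, fun a b h => hρ ?_, funext fun v => ?_⟩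
  · have := hN a; have := hN b; dsimp only at h; omega
  have hrev : ∀ w, univ.sup ρ - ρ w < univ.sup ρ - ρ v ↔ ρ v < ρ w := fun w => by
    have := hN v; have := hN w; omega
  have hsplit := congrArg (Nat.cast (R := ℤ)) (G.sum_E_eq_sum_lt_add_sum_gt hρ v)
  push_cast at hsplit
  simp only [nu, K, valence, hl v, hrev, Pi.sub_apply]
  push_cast
  omega

/-! ### Reduced divisors -/

lemma exists_div_nonneg_off_of_reachable {q v : V}
    (h : Relation.ReflTransGen (fun a b => 0 < G.E a b) q v) :
    ∃ g : V → ℤ, (∀ w ≠ q, 0 ≤ G.div g w) ∧ (v ≠ q → 1 ≤ G.div g v) := by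
  induction h with
  | refl => exact ⟨0, fun w _ => by simp [div], fun h => (h rfl).elim⟩
  | @tail b c _ hbc ih =>
    -- `b` fires once after `g` has been run `outdeg b` times, so it stays out of debt while
    -- its neighbour `c` gains a chip.
    obtain ⟨g, hg, hgb⟩ := ih
    have hout : (0 : ℤ) ≤ G.outdeg {b} b := by positivity
    set g' := (G.outdeg {b} b : ℤ) • g + (({b} : Finset V) : Set V).indicator 1
    have hdiv : ∀ w, G.div g' w =
        G.outdeg {b} b * G.div g w + if w = b then -(G.outdeg {b} b : ℤ) else G.E w b := by
      intro w
      rw [div_add, div_zsmul, Pi.add_apply, Pi.smul_apply, smul_eq_mul]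
      split_ifs with hw
      · subst hw
        rw [G.div_indicator_of_mem (mem_singleton_self w)]
      · rw [G.div_indicator_of_notMem (by simpa using hw), sum_singleton]
    refine ⟨g', fun w hw => ?_, fun hcq => ?_⟩
    · rw [hdiv]
      split_ifs with hwb
      · subst hwb
        nlinarith [hgb hw]
      · have := hg w hw
        positivity
    · have hcb : c ≠ b := fun h => by simp [h, G.noDiag] at hbc
      rw [hdiv, if_neg hcb, G.symm]
      have := hg c hcq
      have : (1 : ℤ) ≤ G.E b c := by exact_mod_cast hbc
      nlinarith

lemma exists_add_div_nonneg_off (hc : G.Connected) (q : V) (d : V → ℤ) :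
    ∃ f : V → ℤ, ∀ v ≠ q, 0 ≤ d v + G.div f v := by
  choose g hg hgv using fun v => G.exists_div_nonneg_off_of_reachable (hc q v)
  refine ⟨∑ v, |d v| • g v, fun w hw => ?_⟩
  have hsum : G.div (∑ v, |d v| • g v) w = ∑ v, |d v| * G.div (g v) w := by
    change G.divHom (∑ v, |d v| • g v) w = _
    simp only [map_sum, map_zsmul, Finset.sum_apply, Pi.smul_apply, smul_eq_mul]
    rfl
  have hw' : |d w| * G.div (g w) w ≤ ∑ v, |d v| * G.div (g v) w :=
    single_le_sum (fun v _ => mul_nonneg (abs_nonneg _) (hg v w hw)) (mem_univ w)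
  have := le_mul_of_one_le_right (abs_nonneg (d w)) (hgv w hw)
  linarith [neg_abs_le (d w)]

lemma sub_le_sum_abs_of_adj {d f : V → ℤ} {q u v : V} (hfq : f q ≤ f u)
    (hd : ∀ w ≠ q, 0 ≤ d w + G.div f w) (huv : 0 < G.E v u) : f v - f u ≤ ∑ w, |d w| := by
  -- The level set `A = {f > f u}` avoids `q` and loses at least `f v - f u` chips across the
  -- edge `vu`, but `d + div f` stays nonnegative on `A`, which only holds `∑ |d|` chips.
  by_contra! h
  have habs : 0 ≤ ∑ w, |d w| := sum_nonneg fun w _ => abs_nonneg (d w)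
  set A : Finset V := {w | f u < f w}
  have hvA : v ∈ A := by simp only [A, mem_filter_univ]; linarith
  have huA : u ∈ Aᶜ := by simp [A]
  have hqA : q ∉ A := by simp [A, hfq]
  have hterm : ∀ w ∈ A, ∀ x ∈ Aᶜ, (G.E w x : ℤ) * (f x - f w) ≤ 0 := by
    intro w hw x hx
    simp only [A, mem_compl, mem_filter_univ, not_lt] at hw hx
    exact mul_nonpos_of_nonneg_of_nonpos (by positivity) (by linarith)
  have hflow : ∑ w ∈ A, G.div f w ≤ f u - f v := by
    have : (1 : ℤ) ≤ G.E v u := by exact_mod_cast huv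
    rw [sum_div_eq_sum_compl]
    calc ∑ w ∈ A, ∑ x ∈ Aᶜ, (G.E w x : ℤ) * (f x - f w)
        ≤ ∑ x ∈ Aᶜ, (G.E v x : ℤ) * (f x - f v) := by
          simpa using sum_le_sum_of_subset_of_nonpos' (singleton_subset_iff.2 hvA)
            fun w hw _ => sum_nonpos (hterm w hw)
      _ ≤ (G.E v u : ℤ) * (f u - f v) := by
          simpa using sum_le_sum_of_subset_of_nonpos' (singleton_subset_iff.2 huA)
            fun x hx _ => hterm v hvA x hx
      _ ≤ f u - f v := by nlinarith
  have hd' : 0 ≤ ∑ w ∈ A, (d w + G.div f w) :=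
    sum_nonneg fun w hw => hd w (ne_of_mem_of_not_mem hw hqA)
  have hdA : ∑ w ∈ A, d w ≤ ∑ w, |d w| :=
    (sum_le_sum fun w _ => le_abs_self (d w)).trans
      (sum_le_sum_of_subset_of_nonneg (subset_univ A) fun w _ _ => abs_nonneg (d w))
  rw [sum_add_distrib] at hd'
  linarith

lemma exists_bound_of_reachable (d : V → ℤ) {q v : V}
    (h : Relation.ReflTransGen (fun a b => 0 < G.E a b) q v) :
    ∃ B : ℤ, ∀ f : V → ℤ, 0 ≤ f → f q = 0 → (∀ w ≠ q, 0 ≤ d w + G.div f w) → f v ≤ B := by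
  induction h with
  | refl => exact ⟨0, fun f _ hq _ => hq.le⟩
  | @tail b c _ hbc ih =>
    obtain ⟨B, hB⟩ := ih
    refine ⟨B + ∑ w, |d w|, fun f h0 hq hd => ?_⟩
    have := G.sub_le_sum_abs_of_adj (hq ▸ h0 b) hd (G.symm b c ▸ hbc)
    linarith [hB f h0 hq hd]

lemma nonneg_add_div_indicator {d : V → ℤ} {A : Finset V}
    (hA : ∀ w ∈ A, (G.outdeg A w : ℤ) ≤ d w) {v : V} (hv : 0 ≤ d v) :
    0 ≤ d v + G.div ((A : Set V).indicator 1) v := by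
  by_cases h : v ∈ A
  · rw [G.div_indicator_of_mem h]
    linarith [hA v h]
  · rw [G.div_indicator_of_notMem h]
    have : (0 : ℤ) ≤ ∑ w ∈ A, (G.E v w : ℤ) := sum_nonneg fun _ _ => by positivity
    linarith

theorem exists_reduced (hc : G.Connected) (q : V) (d : V → ℤ) :
    ∃ f : V → ℤ, G.Reduced q (d + G.div f) := by
  -- Take an admissible firing script of largest total (they are bounded by connectivity): a
  -- set `A ∌ q` violating reducedness could fire legally, giving a larger admissible script.
  obtain ⟨f₁, hf₁⟩ := G.exists_add_div_nonneg_off hc q d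
  set d₁ := d + G.div f₁
  let Admissible (f : V → ℤ) : Prop := 0 ≤ f ∧ f q = 0 ∧ ∀ v ≠ q, 0 ≤ d₁ v + G.div f v
  choose B hB using fun v => G.exists_bound_of_reachable d₁ (hc q v)
  obtain ⟨_, ⟨f₀, ⟨hf₀, hf₀q, hf₀d⟩, rfl⟩, hmax⟩ := Int.exists_greatest_of_bdd
    (P := fun s => ∃ f, Admissible f ∧ s = ∑ v, f v)
    ⟨∑ v, B v, by
      rintro _ ⟨f, ⟨h0, hq, hd⟩, rfl⟩
      exact sum_le_sum fun v _ => hB v f h0 hq hd⟩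
    ⟨0, 0, ⟨le_rfl, rfl, by simpa [div, d₁] using hf₁⟩, by simp⟩
  have hd₀ : d + G.div (f₁ + f₀) = d₁ + G.div f₀ := by rw [div_add, add_assoc]
  refine ⟨f₁ + f₀, hd₀ ▸ hf₀d, fun A hA hqA => ?_⟩
  by_contra! hfire
  rw [hd₀] at hfire
  set χ := (A : Set V).indicator (1 : V → ℤ)
  have hχ : 0 ≤ χ := Set.indicator_nonneg fun _ _ => zero_le_one
  have hfired : Admissible (f₀ + χ) := by
    refine ⟨add_nonneg hf₀ hχ, by simp [χ, hf₀q, hqA], fun v hv => ?_⟩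
    rw [div_add, Pi.add_apply, ← add_assoc]
    exact G.nonneg_add_div_indicator hfire (hf₀d v hv)
  obtain ⟨a, ha⟩ := hA
  have : 1 ≤ ∑ v, χ v := by
    simpa [χ, ha] using single_le_sum (fun v _ => hχ v) (mem_univ a)
  have := hmax _ ⟨_, hfired, rfl⟩
  simp only [Pi.add_apply, sum_add_distrib] at this
  omega

lemma exists_injective_forall_lt_sum {d : V → ℤ}
    (hd : ∀ A : Finset V, A.Nonempty → ∃ v ∈ A, d v < G.outdeg A v) (A : Finset V) :
    ∃ ρ : V → ℕ, Function.Injective ρ ∧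
      ∀ v ∈ A, d v < ∑ w with w ∉ A ∨ ρ w < ρ v, (G.E v w : ℤ) := by
  induction A using Finset.strongInduction with
  | H A ih =>
  rcases A.eq_empty_or_nonempty with rfl | hA
  · obtain ⟨ρ, hρ⟩ := exists_injective_nat V
    exact ⟨ρ, hρ, by simp⟩
  -- Dhar's burning algorithm: `v₀` burns first and is placed before the rest of `A`.
  obtain ⟨v₀, hv₀, hlt⟩ := hd A hA
  obtain ⟨ρ, hρ, hρlt⟩ := ih _ (erase_ssubset hv₀)
  set ρ' : V → ℕ := fun w => if w = v₀ then 0 else ρ w + 1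
  refine ⟨ρ', fun a b h => ?_, fun v hv => ?_⟩
  · by_cases ha : a = v₀ <;> by_cases hb : b = v₀ <;> simp [ρ', ha, hb] at h ⊢
    exact hρ h
  obtain ⟨S, hS, hSsub⟩ : ∃ S : Finset V, d v < ∑ w ∈ S, (G.E v w : ℤ) ∧
      ∀ w ∈ S, w ∉ A ∨ ρ' w < ρ' v := by
    by_cases hvv : v = v₀
    · subst hvv
      exact ⟨Aᶜ, by rwa [← outdeg_eq_sum_compl], fun w hw => Or.inl (mem_compl.1 hw)⟩
    · refine ⟨_, hρlt v (mem_erase.2 ⟨hvv, hv⟩), fun w hw => ?_⟩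
      simp only [mem_filter_univ, mem_erase, not_and_or, not_not] at hw
      by_cases hwv : w = v₀ <;> simp only [ρ', hwv, hvv, if_true, if_false]
      · exact Or.inr (Nat.succ_pos _)
      · rcases hw with (h | h) | h
        exacts [absurd h hwv, Or.inl h, Or.inr (Nat.succ_lt_succ h)]
  refine hS.trans_le (sum_le_sum_of_subset_of_nonneg (fun w hw => ?_) fun _ _ _ => by positivity)
  exact (mem_filter_univ _).2 (hSsub w hw)

lemma exists_le_nu_of_reduced {q : V} {d : V → ℤ} (h : G.Reduced q d) (hq : d q < 0) :
    ∃ ρ : V → ℕ, Function.Injective ρ ∧ d ≤ G.nu ρ := by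
  have hburn : ∀ A : Finset V, A.Nonempty → ∃ v ∈ A, d v < G.outdeg A v := fun A hA => by
    by_cases hqA : q ∈ A
    · exact ⟨q, hqA, hq.trans_le (by positivity)⟩
    · exact h.2 A hA hqA
  obtain ⟨ρ, hρ, hlt⟩ := G.exists_injective_forall_lt_sum hburn univ
  refine ⟨ρ, hρ, fun v => ?_⟩
  have := hlt v (mem_univ v)
  simp only [mem_univ, not_true_eq_false, false_or] at this
  simp only [nu]
  omega

theorem exists_add_div_le_nu_of_not_winnable [Nonempty V] (hc : G.Connected) {d : V → ℤ}
    (hd : ¬ G.Winnable d) : ∃ f ρ, Function.Injective ρ ∧ d + G.div f ≤ G.nu ρ := by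
  set q := Classical.arbitrary V
  obtain ⟨f, hf⟩ := G.exists_reduced hc q d
  have hq : (d + G.div f) q < 0 := by
    by_contra! hq
    exact hd (G.winnable_iff.2 ⟨f, fun v => if hv : v = q then hv ▸ hq else hf.1 v hv⟩)
  obtain ⟨ρ, hρ, hle⟩ := G.exists_le_nu_of_reduced hf hq
  exact ⟨f, ρ, hρ, hle⟩

/-! ### The rank -/

lemma rank_eq_of_forall_winnable {d : V → ℤ} (m : ℕ)
    (hlt : ∀ e, Effective e → deg e < m → G.Winnable (d - e))
    {e₀ : V → ℤ} (he₀ : Effective e₀) (hdeg : deg e₀ = m) (hw : ¬ G.Winnable (d - e₀)) :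
    G.rank d = m - 1 := by
  rcases Nat.eq_zero_or_pos m with rfl | hm
  · rw [he₀.eq_zero_of_deg_eq_zero (by simpa using hdeg), sub_zero] at hw
    simp [rank, hw]
  obtain ⟨v₀⟩ : Nonempty V := by
    by_contra h
    simp [deg, not_nonempty_iff.1 h] at hdeg
    omega
  have hS : {s : ℕ | ∀ e, Effective e → deg e = s → G.Winnable (d - e)} = Set.Iic (m - 1) := by
    ext s
    simp only [Set.mem_ofPred_eq, Set.mem_Iic]
    refine ⟨fun hs => ?_, fun hs e he hdeg => hlt e he (by omega)⟩
    by_contra! hms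
    set e := e₀ + Pi.single v₀ ((s - m : ℕ) : ℤ)
    have hsingle : (0 : V → ℤ) ≤ Pi.single v₀ ((s - m : ℕ) : ℤ) :=
      Pi.single_nonneg.2 (by positivity)
    have he : Effective e := fun v => add_nonneg (he₀ v) (hsingle v)
    have hdeg' : deg e = s := by
      rw [deg_add, hdeg]
      simp only [deg, sum_pi_single', mem_univ, if_true]
      omega
    refine hw ((hs e he hdeg').mono fun v => ?_)
    have := hsingle v
    simp only [e, Pi.sub_apply, Pi.add_apply, Pi.zero_apply] at this ⊢
    linarith
  have hwin : G.Winnable d := by simpa using hlt 0 (fun _ => le_rfl) (by simp [deg]; omega)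
  rw [rank, if_pos hwin, hS, csSup_Iic]
  omega

-- Every divisor is winnable, so the rank is the junk value `sSup ℕ = 0`.
lemma rank_of_isEmpty [IsEmpty V] (d : V → ℤ) : G.rank d = 0 := by
  have hS : {s : ℕ | ∀ e, Effective e → deg e = s → G.Winnable (d - e)} = Set.univ :=
    Set.eq_univ_of_forall fun s e _ _ => G.winnable_of_isEmpty _
  rw [rank, if_pos (G.winnable_of_isEmpty d), hS, csSup_of_not_bddAbove not_bddAbove_univ,
    csSup_empty]
  rfl

def distsToNu (d : V → ℤ) : Set ℕ :=
  {t | ∃ f ρ, Function.Injective ρ ∧ t = degPos (d + G.div f - G.nu ρ)}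

lemma distsToNu_nonempty (d : V → ℤ) : (G.distsToNu d).Nonempty :=
  have ⟨ρ, hρ⟩ := exists_injective_nat V
  ⟨_, 0, ρ, hρ, rfl⟩

lemma exists_not_winnable_of_mem_distsToNu [Nonempty V] {d : V → ℤ} {t : ℕ}
    (ht : t ∈ G.distsToNu d) : ∃ e, Effective e ∧ deg e = t ∧ ¬ G.Winnable (d - e) := by
  obtain ⟨f, ρ, -, rfl⟩ := ht
  set x := d + G.div f - G.nu ρ
  refine ⟨x ⊔ 0, fun v => le_sup_right, (degPos_eq_deg_sup_zero x).symm, fun hw => ?_⟩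
  refine G.nu_not_winnable ρ ((hw.add_div f).mono fun v => ?_)
  have : x v ≤ x v ⊔ 0 := le_sup_left
  simp only [x, Pi.add_apply, Pi.sub_apply, Pi.sup_apply, Pi.zero_apply] at this ⊢
  linarith

lemma exists_mem_distsToNu_le_deg [Nonempty V] (hc : G.Connected) {d e : V → ℤ}
    (he : Effective e) (hw : ¬ G.Winnable (d - e)) : ∃ t ∈ G.distsToNu d, (t : ℤ) ≤ deg e := by
  obtain ⟨f, ρ, hρ, hle⟩ := G.exists_add_div_le_nu_of_not_winnable hc hw
  refine ⟨_, ⟨f, ρ, hρ, rfl⟩, degPos_le_deg he fun v => ?_⟩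
  have := hle v
  simp only [Pi.add_apply, Pi.sub_apply] at this ⊢
  linarith

theorem rank_eq_sInf_distsToNu_sub_one [Nonempty V] (hc : G.Connected) (d : V → ℤ) :
    G.rank d = (sInf (G.distsToNu d) : ℕ) - 1 := by
  obtain ⟨e₀, he₀, hdeg, hw⟩ :=
    G.exists_not_winnable_of_mem_distsToNu (Nat.sInf_mem (G.distsToNu_nonempty d))
  refine G.rank_eq_of_forall_winnable _ (fun e he hlt => ?_) he₀ hdeg hw
  by_contra hwe
  obtain ⟨t, ht, hle⟩ := G.exists_mem_distsToNu_le_deg hc he hwe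
  have := Nat.sInf_le ht
  omega

lemma deg_K (hl : G.Loopless) : deg G.K = 2 * (genus G (fun _ => 0) - 1) := by
  obtain ⟨ρ, hρ⟩ := exists_injective_nat V
  obtain ⟨ρ', hρ', hK⟩ := G.exists_nu_eq_K_sub_nu hl hρ
  rw [← sub_add_cancel G.K (G.nu ρ), ← hK, deg_add, G.deg_nu hl hρ, G.deg_nu hl hρ']
  ring

lemma exists_mem_distsToNu_K_sub (hl : G.Loopless) {d : V → ℤ} {t : ℕ}
    (ht : t ∈ G.distsToNu d) :
    ∃ t' ∈ G.distsToNu (G.K - d), (t' : ℤ) = t - (deg d - genus G (fun _ => 0) + 1) := by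
  obtain ⟨f, ρ, hρ, rfl⟩ := ht
  obtain ⟨ρ', hρ', hK⟩ := G.exists_nu_eq_K_sub_nu hl hρ
  have hneg : G.K - d + G.div (-f) - G.nu ρ' = -(d + G.div f - G.nu ρ) := by
    rw [hK, div_neg]
    abel
  refine ⟨_, ⟨-f, ρ', hρ', rfl⟩, ?_⟩
  rw [hneg, degPos_neg, deg_sub, deg_add, deg_div, G.deg_nu hl hρ]
  ring

lemma sInf_distsToNu_K_sub (hl : G.Loopless) (d : V → ℤ) :
    ((sInf (G.distsToNu (G.K - d)) : ℕ) : ℤ)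
      = (sInf (G.distsToNu d) : ℕ) - (deg d - genus G (fun _ => 0) + 1) := by
  obtain ⟨t, ht, heq⟩ :=
    G.exists_mem_distsToNu_K_sub hl (Nat.sInf_mem (G.distsToNu_nonempty d))
  obtain ⟨t', ht', heq'⟩ :=
    G.exists_mem_distsToNu_K_sub hl (Nat.sInf_mem (G.distsToNu_nonempty (G.K - d)))
  rw [sub_sub_cancel] at ht'
  rw [deg_sub, G.deg_K hl] at heq'
  have := Nat.sInf_le ht
  have := Nat.sInf_le ht'
  omega

end MultiGraph

theorem statement_16_general {V : Type} [Fintype V]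
    (G : MultiGraph V) (hl : G.Loopless) (hc : G.Connected) (d : V → ℤ) :
    G.rank d - G.rank (G.K - d) = deg d - genus G (fun _ => 0) + 1 := by
  rcases isEmpty_or_nonempty V with _ | _
  · simp [G.rank_of_isEmpty, deg, genus, edgeCount]
  · rw [G.rank_eq_sInf_distsToNu_sub_one hc, G.rank_eq_sInf_distsToNu_sub_one hc,
      G.sInf_distsToNu_K_sub hl d]
    ring

/-- Riemann–Roch for graphs (Baker–Norine). -/
theorem statement_16 {V : Type} [Fintype V] [DecidableEq V]
    (G : MultiGraph V) (hl : G.Loopless) (hc : G.Connected) (d : V → ℤ) :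
    G.rank d - G.rank (G.K - d) = deg d - genus G (fun _ => 0) + 1 :=
  statement_16_general G hl hc d

end BN
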